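/- arXiv:1607.04912 — 2 statements merged into one kernel-verified Lean document; each statement's English description precedes it below -/
import Mathlib

section
/- Let u solve du + μ u dt = σ λ^{−γ} dw with deterministic u(0), and let ξ(t) = ∫_0^t u²(s) ds. Then for every n ∈ ℕ there exists a constant D_n > 0, depending only on n and t (not on μ, λ, u(0)), such that E[ξ(t)^n] ≤ D_n ((u²(0) + σ² t λ^{−2γ})/μ)^n for all t ∈ (0, T]. -/
/-!
Write `b = σ λ^{-γ}`. Since `(x + y)² ≤ 2x² + 2y²` and `∫_0^t e^{-2μr} dr ≤ 1/(2μ)`, each path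
satisfies `ξ(t) ≤ u0²/μ + 2b² ∫_0^t e^{-2μr} J(r)² dr`. Jensen's inequality on `(0, t]` followed
by Tonelli bounds the `n`-th moment of the time integral by `t^n` times the largest `n`-th moment
of the integrand. As `J(r) ~ N(0, V(r))` with `e^{-2μr} V(r) ≤ 1/(2μ)`, that moment is at most
`(2μ)^{-n} E[Z^{2n}]` for a standard Gaussian `Z`, and `(a + b)^n ≤ 2^{n-1}(a^n + b^n)` gives
`D = 2^{n-1} (1 + E[Z^{2n}])`.
-/

open MeasureTheory ProbabilityTheory Filter

/-- A process `u` is a centered Gaussian process (on nonnegative times) with covariance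
function `K` if every finite linear combination of its values is a centered Gaussian
random variable with the variance prescribed by `K`. -/
def IsCenteredGaussianProcess {Ω : Type*} [MeasurableSpace Ω]
    (u : ℝ → Ω → ℝ) (P : Measure Ω) (K : ℝ → ℝ → ℝ) : Prop :=
  ∀ (n : ℕ) (t : Fin n → ℝ), (∀ i, 0 ≤ t i) → ∀ c : Fin n → ℝ,
    Measure.map (fun ω => ∑ i, c i * u (t i) ω) P =
      gaussianReal 0 (∑ i, ∑ j, c i * c j * K (t i) (t j)).toNNReal

open Real Set
open scoped ENNReal NNReal

lemma integral_exp_mul_eq_div {c : ℝ} (hc : c ≠ 0) (s : ℝ) :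
    ∫ x in (0:ℝ)..s, exp (c * x) = (exp (c * s) - 1) / c := by
  rw [intervalIntegral.integral_comp_mul_left (fun x => exp x) hc, mul_zero, integral_exp,
    exp_zero, smul_eq_mul, inv_mul_eq_div]

lemma integral_exp_neg_mul_le {a : ℝ} (ha : 0 < a) (s : ℝ) :
    ∫ x in (0:ℝ)..s, exp (-a * x) ≤ a⁻¹ := by
  rw [integral_exp_mul_eq_div (neg_ne_zero.2 ha.ne'), div_neg, ← neg_div, neg_sub, inv_eq_one_div]
  gcongr
  linarith [exp_pos (-a * s)]

lemma exp_neg_mul_mul_integral_exp_mul_le {a : ℝ} (ha : 0 < a) (s : ℝ) :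
    exp (-a * s) * ∫ x in (0:ℝ)..s, exp (a * x) ≤ a⁻¹ := by
  rw [integral_exp_mul_eq_div ha.ne', mul_div_assoc', mul_sub, ← exp_add, neg_mul, neg_add_cancel,
    exp_zero, mul_one, inv_eq_one_div]
  gcongr
  linarith [exp_pos (-(a * s))]

lemma sq_mul_rpow_neg_mul {x : ℝ} (hx : 0 ≤ x) (a y t : ℝ) :
    (a * x ^ (-y)) ^ 2 * t = a ^ 2 * t * x ^ (-(2 * y)) := by
  rw [mul_pow, ← rpow_natCast (x ^ (-y)), ← rpow_mul hx]
  push_cast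
  ring_nf

lemma integral_sq_le_of_eq_exp_neg_mul {μ b u0 t : ℝ} (hμ : 0 < μ) (ht : 0 ≤ t) {J u : ℝ → ℝ}
    (hJ : Continuous J) (hu : ∀ s, u s = exp (-(μ * s)) * u0 + b * exp (-(μ * s)) * J s) :
    ∫ r in (0:ℝ)..t, u r ^ 2
      ≤ u0 ^ 2 / μ + 2 * b ^ 2 * ∫ r in (0:ℝ)..t, exp (-(2 * μ) * r) * J r ^ 2 := by
  have hexp : ∀ s, exp (-(μ * s)) ^ 2 = exp (-(2 * μ) * s) := fun s => by
    rw [← exp_nat_mul]; ring_nf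
  have hsq : ∀ r, u r ^ 2 ≤ 2 * u0 ^ 2 * exp (-(2 * μ) * r)
      + 2 * b ^ 2 * (exp (-(2 * μ) * r) * J r ^ 2) := fun r => by
    calc u r ^ 2 ≤ 2 * ((exp (-(μ * r)) * u0) ^ 2 + (b * exp (-(μ * r)) * J r) ^ 2) := by
          rw [hu]; exact add_sq_le
      _ = _ := by rw [mul_pow, mul_pow, mul_pow, hexp]; ring
  have hu_cont : Continuous u := by
    simp only [funext hu]; fun_prop
  calc ∫ r in (0:ℝ)..t, u r ^ 2
      ≤ ∫ r in (0:ℝ)..t, (2 * u0 ^ 2 * exp (-(2 * μ) * r)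
          + 2 * b ^ 2 * (exp (-(2 * μ) * r) * J r ^ 2)) :=
        intervalIntegral.integral_mono_on ht ((hu_cont.pow 2).intervalIntegrable _ _)
          ((by fun_prop : Continuous _).intervalIntegrable _ _) fun r _ => hsq r
    _ = 2 * u0 ^ 2 * (∫ r in (0:ℝ)..t, exp (-(2 * μ) * r))
          + 2 * b ^ 2 * ∫ r in (0:ℝ)..t, exp (-(2 * μ) * r) * J r ^ 2 := by
        rw [intervalIntegral.integral_add ((by fun_prop : Continuous _).intervalIntegrable _ _)
          ((by fun_prop : Continuous _).intervalIntegrable _ _),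
          intervalIntegral.integral_const_mul, intervalIntegral.integral_const_mul]
    _ ≤ 2 * u0 ^ 2 * (2 * μ)⁻¹ + 2 * b ^ 2 * ∫ r in (0:ℝ)..t, exp (-(2 * μ) * r) * J r ^ 2 := by
        gcongr
        exact integral_exp_neg_mul_le (by positivity) t
    _ = _ := by field_simp

lemma integral_sq_pow_le_of_eq_exp_neg_mul {μ b u0 t : ℝ} (hμ : 0 < μ) (ht : 0 ≤ t)
    {J u : ℝ → ℝ} (hJ : Continuous J)
    (hu : ∀ s, u s = exp (-(μ * s)) * u0 + b * exp (-(μ * s)) * J s) (n : ℕ) :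
    (∫ r in (0:ℝ)..t, u r ^ 2) ^ n ≤ 2 ^ (n - 1) * (u0 ^ 2 / μ) ^ n
      + 2 ^ (n - 1) * (2 * b ^ 2) ^ n * (∫ r in Ioc 0 t, exp (-(2 * μ) * r) * J r ^ 2) ^ n := by
  have hJ0 : 0 ≤ ∫ r in Ioc 0 t, exp (-(2 * μ) * r) * J r ^ 2 :=
    setIntegral_nonneg measurableSet_Ioc fun r _ => by positivity
  calc (∫ r in (0:ℝ)..t, u r ^ 2) ^ n
      ≤ (u0 ^ 2 / μ + 2 * b ^ 2 * ∫ r in Ioc 0 t, exp (-(2 * μ) * r) * J r ^ 2) ^ n := by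
        gcongr
        · exact intervalIntegral.integral_nonneg ht fun r _ => sq_nonneg _
        · exact (integral_sq_le_of_eq_exp_neg_mul hμ ht hJ hu).trans_eq
            (by rw [intervalIntegral.integral_of_le ht])
    _ ≤ 2 ^ (n - 1) * ((u0 ^ 2 / μ) ^ n
          + (2 * b ^ 2 * ∫ r in Ioc 0 t, exp (-(2 * μ) * r) * J r ^ 2) ^ n) :=
        add_pow_le (by positivity) (by positivity) n
    _ = _ := by ring

lemma integrable_pow_gaussianReal (k : ℕ) (μ : ℝ) (v : ℝ≥0) :
    Integrable (fun x : ℝ => x ^ k) (gaussianReal μ v) :=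
  ((memLp_id_gaussianReal (k : ℝ≥0)).integrable_norm_pow').mono' (by fun_prop)
    (ae_of_all _ fun x => by simp [norm_pow])

lemma integral_pow_two_mul_nonneg (m : ℕ) (ν : Measure ℝ) : 0 ≤ ∫ x, x ^ (2 * m) ∂ν :=
  integral_nonneg fun x => (even_two_mul m).pow_nonneg x

section Moments

variable {Ω : Type*} [MeasurableSpace Ω] {P : Measure Ω}

lemma IsCenteredGaussianProcess.map_eq_gaussianReal {u : ℝ → Ω → ℝ} {K : ℝ → ℝ → ℝ}
    (hu : IsCenteredGaussianProcess u P K) {s : ℝ} (hs : 0 ≤ s) :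
    P.map (u s) = gaussianReal 0 (K s s).toNNReal := by
  simpa using hu 1 (fun _ => s) (fun _ => hs) (fun _ => 1)

lemma lintegral_ofReal_pow_two_mul_of_map_eq_gaussianReal {X : Ω → ℝ} (hX : Measurable X)
    {v : ℝ≥0} (hXP : P.map X = gaussianReal 0 v) (m : ℕ) :
    ∫⁻ ω, ENNReal.ofReal (X ω ^ (2 * m)) ∂P
      = ENNReal.ofReal (v ^ m * ∫ x, x ^ (2 * m) ∂gaussianReal 0 1) := by
  have hscale : (gaussianReal 0 1).map (√v * ·) = gaussianReal 0 v := by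
    rw [gaussianReal_map_const_mul]
    congr 1
    · simp
    · ext; simp
  rw [← lintegral_map (f := fun x => ENNReal.ofReal (x ^ (2 * m))) (by fun_prop) hX, hXP,
    ← hscale, lintegral_map (by fun_prop) (by fun_prop), ENNReal.ofReal_mul (by positivity),
    ofReal_integral_eq_lintegral_ofReal (integrable_pow_gaussianReal _ 0 1)
      (ae_of_all _ fun x => (even_two_mul m).pow_nonneg x),
    ← lintegral_const_mul' _ _ ENNReal.ofReal_ne_top]
  congr 1 with x
  rw [← ENNReal.ofReal_mul (by positivity), mul_pow, pow_mul, Real.sq_sqrt v.coe_nonneg]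

lemma integral_le_of_lintegral_ofReal_le {f : Ω → ℝ} (hf : 0 ≤ᵐ[P] f) {C : ℝ} (hC : 0 ≤ C)
    (h : ∫⁻ ω, ENNReal.ofReal (f ω) ∂P ≤ ENNReal.ofReal C) : ∫ ω, f ω ∂P ≤ C := by
  by_cases hfi : Integrable f P
  · rwa [← ofReal_integral_eq_lintegral_ofReal hfi hf, ENNReal.ofReal_le_ofReal_iff hC] at h
  · rwa [integral_undef hfi]

lemma lintegral_ofReal_le_add_mul [IsProbabilityMeasure P] {F G : Ω → ℝ} {A B : ℝ} (hB : 0 ≤ B)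
    (h : ∀ ω, F ω ≤ A + B * G ω) :
    ∫⁻ ω, ENNReal.ofReal (F ω) ∂P
      ≤ ENNReal.ofReal A + ENNReal.ofReal B * ∫⁻ ω, ENNReal.ofReal (G ω) ∂P := by
  calc ∫⁻ ω, ENNReal.ofReal (F ω) ∂P
      ≤ ∫⁻ ω, (ENNReal.ofReal A + ENNReal.ofReal B * ENNReal.ofReal (G ω)) ∂P :=
        lintegral_mono fun ω => (ENNReal.ofReal_le_ofReal (h ω)).trans
          ((ENNReal.ofReal_add_le).trans_eq (by rw [ENNReal.ofReal_mul hB]))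
    _ = _ := by
        rw [lintegral_add_left measurable_const, lintegral_const_mul' _ _ ENNReal.ofReal_ne_top,
          lintegral_const, measure_univ, mul_one]

lemma lintegral_ofReal_integral_pow_le {β : Type*} [MeasurableSpace β] {ν : Measure β}
    [IsFiniteMeasure ν] [NeZero ν] [SFinite P] {g : β → Ω → ℝ}
    (hg : Measurable (Function.uncurry g)) (hg0 : ∀ r ω, 0 ≤ g r ω) (n : ℕ)
    (hgi : ∀ ω, Integrable (g · ω) ν) (hgni : ∀ ω, Integrable (fun r => g r ω ^ n) ν)
    {M : ℝ≥0∞} (hM : ∀ᵐ r ∂ν, ∫⁻ ω, ENNReal.ofReal (g r ω ^ n) ∂P ≤ M) :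
    ∫⁻ ω, ENNReal.ofReal ((∫ r, g r ω ∂ν) ^ n) ∂P ≤ ENNReal.ofReal (ν.real univ ^ n) * M := by
  set a := ν.real univ
  have ha : 0 < a := measureReal_univ_pos
  have jensen : ∀ ω, (∫ r, g r ω ∂ν) ^ n ≤ a ^ n * a⁻¹ * ∫ r, g r ω ^ n ∂ν := fun ω => by
    have := (convexOn_pow n).map_average_le (continuous_pow n).continuousOn isClosed_Ici
      (ae_of_all _ (hg0 · ω)) (hgi ω) (hgni ω)
    rw [average_eq, average_eq, smul_eq_mul, smul_eq_mul, mul_pow] at this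
    calc (∫ r, g r ω ∂ν) ^ n = a ^ n * (a⁻¹ ^ n * (∫ r, g r ω ∂ν) ^ n) := by
          rw [← mul_assoc, ← mul_pow, mul_inv_cancel₀ ha.ne', one_pow, one_mul]
      _ ≤ a ^ n * a⁻¹ * ∫ r, g r ω ^ n ∂ν := by
          rw [mul_assoc]; gcongr
  calc ∫⁻ ω, ENNReal.ofReal ((∫ r, g r ω ∂ν) ^ n) ∂P
      ≤ ∫⁻ ω, ENNReal.ofReal (a ^ n * a⁻¹) * ∫⁻ r, ENNReal.ofReal (g r ω ^ n) ∂ν ∂P := by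
        refine lintegral_mono fun ω => (ENNReal.ofReal_le_ofReal (jensen ω)).trans_eq ?_
        rw [ENNReal.ofReal_mul (by positivity), ofReal_integral_eq_lintegral_ofReal (hgni ω)
          (ae_of_all _ fun r => pow_nonneg (hg0 r ω) n)]
    _ = ENNReal.ofReal (a ^ n * a⁻¹) * ∫⁻ r, ∫⁻ ω, ENNReal.ofReal (g r ω ^ n) ∂P ∂ν := by
        rw [lintegral_const_mul' _ _ ENNReal.ofReal_ne_top, lintegral_lintegral_swap
          ((hg.comp measurable_swap).pow_const n).ennreal_ofReal.aemeasurable]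
    _ ≤ ENNReal.ofReal (a ^ n * a⁻¹) * (ENNReal.ofReal a * M) := by
        gcongr
        refine (lintegral_mono_ae hM).trans_eq ?_
        rw [lintegral_const, ofReal_measureReal, mul_comm]
    _ = ENNReal.ofReal (a ^ n) * M := by
        rw [← mul_assoc, ← ENNReal.ofReal_mul (by positivity), mul_assoc, inv_mul_cancel₀ ha.ne',
          mul_one]

variable {μ : ℝ} {J : ℝ → Ω → ℝ}

lemma lintegral_ofReal_exp_mul_sq_pow_le (hμ : 0 < μ) (hJm : ∀ s, Measurable (J s))
    (hJ : IsCenteredGaussianProcess J P fun s r => ∫ x in (0:ℝ)..(min s r), exp (2 * μ * x))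
    {r : ℝ} (hr : 0 ≤ r) (n : ℕ) :
    ∫⁻ ω, ENNReal.ofReal ((exp (-(2 * μ) * r) * J r ω ^ 2) ^ n) ∂P
      ≤ ENNReal.ofReal ((2 * μ)⁻¹ ^ n * ∫ x, x ^ (2 * n) ∂gaussianReal 0 1) := by
  set V := ∫ x in (0:ℝ)..r, exp (2 * μ * x)
  have hV : 0 ≤ V := intervalIntegral.integral_nonneg hr fun x _ => (exp_pos _).le
  have hlaw : P.map (J r) = gaussianReal 0 V.toNNReal := by
    simpa using hJ.map_eq_gaussianReal hr
  calc ∫⁻ ω, ENNReal.ofReal ((exp (-(2 * μ) * r) * J r ω ^ 2) ^ n) ∂P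
      = ENNReal.ofReal (exp (-(2 * μ) * r) ^ n) * ∫⁻ ω, ENNReal.ofReal (J r ω ^ (2 * n)) ∂P := by
        rw [← lintegral_const_mul' _ _ ENNReal.ofReal_ne_top]
        congr 1 with ω
        rw [← ENNReal.ofReal_mul (by positivity), mul_pow, pow_mul]
    _ = ENNReal.ofReal ((exp (-(2 * μ) * r) * V) ^ n * ∫ x, x ^ (2 * n) ∂gaussianReal 0 1) := by
        rw [lintegral_ofReal_pow_two_mul_of_map_eq_gaussianReal (hJm r) hlaw,
          Real.coe_toNNReal _ hV, ← ENNReal.ofReal_mul (by positivity), mul_pow, mul_assoc]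
    _ ≤ _ := by
        have := integral_pow_two_mul_nonneg n (gaussianReal 0 1)
        gcongr
        exact exp_neg_mul_mul_integral_exp_mul_le (by positivity) r

lemma lintegral_ofReal_integral_sq_pow_le [IsProbabilityMeasure P] (hμ : 0 < μ) {b u0 t : ℝ}
    (ht : 0 < t) {u : ℝ → Ω → ℝ} (hJm : ∀ s, Measurable (J s))
    (hJc : ∀ ω, Continuous fun s => J s ω)
    (hJ : IsCenteredGaussianProcess J P fun s r => ∫ x in (0:ℝ)..(min s r), exp (2 * μ * x))
    (hu : ∀ s ω, u s ω = exp (-(μ * s)) * u0 + b * exp (-(μ * s)) * J s ω) (n : ℕ) :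
    ∫⁻ ω, ENNReal.ofReal ((∫ r in (0:ℝ)..t, u r ω ^ 2) ^ n) ∂P
      ≤ ENNReal.ofReal (2 ^ (n - 1) * ((u0 ^ 2 / μ) ^ n
          + (∫ x, x ^ (2 * n) ∂gaussianReal 0 1) * (b ^ 2 * t / μ) ^ n)) := by
  set c := ∫ x, x ^ (2 * n) ∂gaussianReal 0 1
  set f : ℝ → Ω → ℝ := fun r ω => exp (-(2 * μ) * r) * J r ω ^ 2
  have hfc : ∀ ω, Continuous fun r => f r ω := fun ω => by
    have := hJc ω; fun_prop
  have hfm : Measurable (Function.uncurry f) :=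
    (measurable_fst.const_mul _).exp.mul
      ((measurable_uncurry_of_continuous_of_measurable hJc hJm).pow_const 2)
  have : NeZero (volume.restrict (Ioc (0:ℝ) t)) := ⟨by simp [ht]⟩
  have hmoment : ∫⁻ ω, ENNReal.ofReal ((∫ r in Ioc 0 t, f r ω) ^ n) ∂P
      ≤ ENNReal.ofReal (t ^ n) * ENNReal.ofReal ((2 * μ)⁻¹ ^ n * c) := by
    have := lintegral_ofReal_integral_pow_le (P := P) (ν := volume.restrict (Ioc 0 t)) hfm
      (fun r ω => by positivity) n (fun ω => (hfc ω).integrableOn_Ioc (μ := volume))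
      (fun ω => ((hfc ω).pow n).integrableOn_Ioc (μ := volume))
      (ae_restrict_of_forall_mem measurableSet_Ioc fun r hr =>
        lintegral_ofReal_exp_mul_sq_pow_le hμ hJm hJ hr.1.le n)
    rwa [measureReal_restrict_apply_univ, volume_real_Ioc_of_le ht.le, sub_zero] at this
  have hc := integral_pow_two_mul_nonneg n (gaussianReal 0 1)
  have hconst : (2 * b ^ 2) ^ n * (t ^ n * ((2 * μ)⁻¹ ^ n * c)) = c * (b ^ 2 * t / μ) ^ n := by
    rw [show b ^ 2 * t / μ = 2 * b ^ 2 * t * (2 * μ)⁻¹ by field_simp,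
      mul_pow (2 * b ^ 2 * t), mul_pow (2 * b ^ 2) t]
    ring
  calc ∫⁻ ω, ENNReal.ofReal ((∫ r in (0:ℝ)..t, u r ω ^ 2) ^ n) ∂P
      ≤ ENNReal.ofReal (2 ^ (n - 1) * (u0 ^ 2 / μ) ^ n) + ENNReal.ofReal
          (2 ^ (n - 1) * (2 * b ^ 2) ^ n) * ∫⁻ ω, ENNReal.ofReal ((∫ r in Ioc 0 t, f r ω) ^ n) ∂P :=
        lintegral_ofReal_le_add_mul (by positivity) fun ω =>
          integral_sq_pow_le_of_eq_exp_neg_mul hμ ht.le (hJc ω) (hu · ω) n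
    _ ≤ ENNReal.ofReal (2 ^ (n - 1) * (u0 ^ 2 / μ) ^ n) + ENNReal.ofReal
          (2 ^ (n - 1) * (2 * b ^ 2) ^ n) * (ENNReal.ofReal (t ^ n)
            * ENNReal.ofReal ((2 * μ)⁻¹ ^ n * c)) := by
        gcongr
    _ = _ := by
        rw [← ENNReal.ofReal_mul (by positivity), ← ENNReal.ofReal_mul (by positivity),
          ← ENNReal.ofReal_add (by positivity) (by positivity), mul_assoc _ _ (_ * _), hconst,
          mul_add]

end Moments

theorem moment_bound_xi_general
    (σ γ T : ℝ) (n : ℕ) :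
    ∀ t ∈ Set.Ioc (0:ℝ) T, ∃ D > (0:ℝ),
      ∀ (μ lam u0 : ℝ), 0 < μ → 0 < lam →
      ∀ (Ω : Type) [MeasurableSpace Ω] (P : Measure Ω) [IsProbabilityMeasure P]
        (J u ξ : ℝ → Ω → ℝ),
        (∀ s, Measurable (J s)) →
        (∀ ω, Continuous fun s => J s ω) →
        IsCenteredGaussianProcess J P
          (fun s r => ∫ x in (0:ℝ)..(min s r), Real.exp (2 * μ * x)) →
        (∀ s ω, u s ω =
          Real.exp (-(μ * s)) * u0 + σ * lam ^ (-γ) * Real.exp (-(μ * s)) * J s ω) →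
        (∀ s ω, ξ s ω = ∫ r in (0:ℝ)..s, (u r ω) ^ 2) →
        ∫ ω, (ξ t ω) ^ n ∂P ≤ D * ((u0 ^ 2 + σ ^ 2 * t * lam ^ (-(2 * γ))) / μ) ^ n := by
  rintro t ⟨ht, -⟩
  have hc := integral_pow_two_mul_nonneg n (gaussianReal 0 1)
  refine ⟨2 ^ (n - 1) * (1 + ∫ x, x ^ (2 * n) ∂gaussianReal 0 1), by positivity, ?_⟩
  intro μ lam u0 hμ hlam Ω _ P _ J u ξ hJm hJc hJ hu hξ
  rw [← sq_mul_rpow_neg_mul hlam.le]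
  refine integral_le_of_lintegral_ofReal_le (ae_of_all _ fun ω => ?_) (by positivity) ?_
  · rw [hξ]
    exact pow_nonneg (intervalIntegral.integral_nonneg ht.le fun _ _ => sq_nonneg _) n
  simp only [hξ]
  refine (lintegral_ofReal_integral_sq_pow_le hμ ht hJm hJc hJ hu n).trans
    (ENNReal.ofReal_le_ofReal ?_)
  calc _ ≤ 2 ^ (n - 1) * (((u0 ^ 2 + (σ * lam ^ (-γ)) ^ 2 * t) / μ) ^ n
          + (∫ x, x ^ (2 * n) ∂gaussianReal 0 1)
            * ((u0 ^ 2 + (σ * lam ^ (-γ)) ^ 2 * t) / μ) ^ n) := by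
        gcongr
        · exact le_add_of_nonneg_right (by positivity)
        · exact le_add_of_nonneg_left (sq_nonneg u0)
    _ = _ := by ring

/-- **Moment bound for `ξ(t) = ∫_0^t u²(s) ds`.**
Let `u(t) = e^{-μt} u0 + σ λ^{-γ} e^{-μt} J(t)` be the Ornstein–Uhlenbeck solution of
`du + μu dt = σ λ^{-γ} dw` (with `J` the Wiener integral of `e^{μs}`). For every
`n ∈ ℕ` and `t ∈ (0, T]` there is a constant `D > 0`, depending only on `n` and `t`
(and not on `μ`, `λ`, `u0`), such that
`E[ξ(t)^n] ≤ D ((u0² + σ² t λ^{-2γ})/μ)^n`. -/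
theorem moment_bound_xi
    (σ γ T : ℝ) (hσ : 0 < σ) (hγ : 0 ≤ γ) (hT : 0 < T) (n : ℕ) :
    ∀ t ∈ Set.Ioc (0:ℝ) T, ∃ D > (0:ℝ),
      ∀ (μ lam u0 : ℝ), 0 < μ → 0 < lam →
      ∀ (Ω : Type) [MeasurableSpace Ω] (P : Measure Ω) [IsProbabilityMeasure P]
        (J u ξ : ℝ → Ω → ℝ),
        (∀ s, Measurable (J s)) →
        (∀ ω, Continuous fun s => J s ω) →
        IsCenteredGaussianProcess J P
          (fun s r => ∫ x in (0:ℝ)..(min s r), Real.exp (2 * μ * x)) →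
        (∀ s ω, u s ω =
          Real.exp (-(μ * s)) * u0 + σ * lam ^ (-γ) * Real.exp (-(μ * s)) * J s ω) →
        (∀ s ω, ξ s ω = ∫ r in (0:ℝ)..s, (u r ω) ^ 2) →
        ∫ ω, (ξ t ω) ^ n ∂P ≤ D * ((u0 ^ 2 + σ ^ 2 * t * lam ^ (-(2 * γ))) / μ) ^ n :=
  moment_bound_xi_general σ γ T n
end

section
/- Let u solve du + μ u dt = dw with u(0) = 0, ξ(t) = ∫_0^t u²(s) ds, and Z = ∫_0^T ξ(t)² dt. Then E[Z] = (35 − 3e^{−4μT} − 32e^{−2μT})/(64μ⁵) − (9T + 10T e^{−2μT})/(16μ⁴) + T²/(8μ³) + T³/(12μ²). -/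
open MeasureTheory ProbabilityTheory Filter

/-!
Tonelli's theorem gives `E[Z] = ∫₀ᵀ E[ξ(t)²] dt` and `E[ξ(t)²] = ∫∫_{[0,t]²} E[u(s)² u(r)²] ds dr`.
For a centred Gaussian pair, Isserlis' formula `E[X²Y²] = E[X²] E[Y²] + 2 E[XY]²` follows from
the fourth moment `3v²` of `N(0, v)` by polarization, so with the covariance `K` of `u`,
`E[ξ(t)²] = (∫₀ᵗ K(s,s) ds)² + 2 ∫₀ᵗ∫₀ᵗ K(s,r)² dr ds`. Since `K` is a combination of exponentials,
what remains is the evaluation of elementary integrals.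
-/

open Real Set Function
open scoped NNReal

lemma integrable_pow_mul_gaussianPDFReal (v : ℝ≥0) (n : ℕ) :
    Integrable fun x => x ^ n * gaussianPDFReal 0 v x := by
  rcases eq_or_ne v 0 with rfl | hv
  · simp
  have hb : 0 < (2 * (v : ℝ))⁻¹ := by positivity
  refine ((integrable_rpow_mul_exp_neg_mul_sq hb (s := n) (neg_one_lt_zero.trans_le
    n.cast_nonneg)).const_mul (√(2 * π * v))⁻¹).congr (ae_of_all _ fun x => ?_)
  simp only [gaussianPDFReal, rpow_natCast, sub_zero]
  field_simp

lemma hasDerivAt_gaussianPDFReal (v : ℝ≥0) (x : ℝ) :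
    HasDerivAt (gaussianPDFReal 0 v) (-(x / v) * gaussianPDFReal 0 v x) x := by
  rw [gaussianPDFReal_def]
  refine ((((hasDerivAt_id' x).sub_const 0).pow 2).neg.div_const (2 * (v : ℝ))).exp.const_mul
    _ |>.congr_deriv ?_
  rcases eq_or_ne (v : ℝ) 0 with hv | hv
  · simp [hv]
  · simp only [Pi.pow_apply, Pi.neg_apply]
    field_simp; ring

lemma integral_pow_add_two_gaussianReal (v : ℝ≥0) (n : ℕ) :
    ∫ x, x ^ (n + 2) ∂gaussianReal 0 v = (n + 1) * v * ∫ x, x ^ n ∂gaussianReal 0 v := by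
  rcases eq_or_ne v 0 with rfl | hv
  · simp
  have hv' : (v : ℝ) ≠ 0 := by exact_mod_cast hv
  simp only [integral_gaussianReal_eq_integral_smul hv, smul_eq_mul]
  have hderiv (x : ℝ) : HasDerivAt (fun y => y ^ (n + 1) * gaussianPDFReal 0 v y)
      ((n + 1) * (x ^ n * gaussianPDFReal 0 v x) - x ^ (n + 2) * gaussianPDFReal 0 v x / v) x := by
    refine (hasDerivAt_pow (n + 1) x).mul (hasDerivAt_gaussianPDFReal v x) |>.congr_deriv ?_
    rw [Nat.add_sub_cancel]; push_cast; field_simp; ring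
  have hint := integrable_pow_mul_gaussianPDFReal v
  have h := integral_eq_zero_of_hasDerivAt_of_integrable hderiv
    (((hint n).const_mul _).sub ((hint (n + 2)).div_const _)) (hint (n + 1))
  rw [integral_sub ((hint n).const_mul _) ((hint (n + 2)).div_const _), integral_const_mul,
    integral_div, sub_eq_zero] at h
  simp only [mul_comm (gaussianPDFReal 0 v _)]
  rw [eq_div_iff hv'] at h
  rw [← h]; ring

lemma integral_pow_four_gaussianReal (v : ℝ≥0) :
    ∫ x, x ^ 4 ∂gaussianReal 0 v = 3 * v ^ 2 := by
  rw [integral_pow_add_two_gaussianReal v 2, integral_pow_add_two_gaussianReal v 0]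
  simp; ring

lemma integrable_uncurry_of_nonneg {α β : Type*} [MeasurableSpace α] [MeasurableSpace β]
    {μ : Measure α} {ν : Measure β} [SFinite μ] [SFinite ν] {f : α → β → ℝ}
    (hf : AEStronglyMeasurable (uncurry f) (μ.prod ν)) (hf₀ : ∀ x y, 0 ≤ f x y)
    (hint : ∀ᵐ y ∂ν, Integrable (f · y) μ) (hint' : Integrable (fun y => ∫ x, f x y ∂μ) ν) :
    Integrable (uncurry f) (μ.prod ν) := by
  refine (integrable_prod_iff' hf).2 ⟨hint, hint'.congr (ae_of_all _ fun y => ?_)⟩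
  simp [Real.norm_of_nonneg (hf₀ _ _)]

lemma Continuous.integrable_prod_restrict_Ioc {g : ℝ × ℝ → ℝ} (hg : Continuous g) (a b : ℝ) :
    Integrable g ((volume.restrict (Ioc a b)).prod (volume.restrict (Ioc a b))) := by
  rw [Measure.prod_restrict, ← Measure.volume_eq_prod]
  exact (hg.continuousOn.integrableOn_compact (isCompact_Icc.prod isCompact_Icc)).mono_set
    (prod_mono Ioc_subset_Icc_self Ioc_subset_Icc_self)

lemma ae_mem_prod_restrict_Ioc (a b : ℝ) :
    ∀ᵐ p ∂(volume.restrict (Ioc a b)).prod (volume.restrict (Ioc a b)), p ∈ Ioc a b ×ˢ Ioc a b := by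
  rw [Measure.prod_restrict]
  exact ae_restrict_mem (measurableSet_Ioc.prod measurableSet_Ioc)

lemma measurable_uncurry_intervalIntegral {Ω : Type*} [MeasurableSpace Ω] {f : ℝ → Ω → ℝ}
    (hf : Measurable (uncurry f)) (hcont : ∀ ω, Continuous fun s => f s ω) (a : ℝ) :
    Measurable (uncurry fun t ω => ∫ s in a..t, f s ω) := by
  have hIoc (c d : ℝ) : Measurable fun ω => ∫ s in Ioc c d, f s ω :=
    (hf.comp measurable_swap).stronglyMeasurable.integral_prod_right'.measurable
  refine measurable_uncurry_of_continuous_of_measurable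
    (fun ω => intervalIntegral.continuous_primitive (fun b c => (hcont ω).intervalIntegrable b c) a)
    fun t => ?_
  simp only [intervalIntegral]
  exact (hIoc a t).sub (hIoc t a)

section

variable {Ω : Type*} [MeasurableSpace Ω] {P : Measure Ω}

lemma integral_pow_four_of_map_eq_gaussianReal {X : Ω → ℝ} (hX : Measurable X) {v : ℝ≥0}
    (hXv : P.map X = gaussianReal 0 v) :
    Integrable (fun ω => X ω ^ 4) P ∧ ∫ ω, X ω ^ 4 ∂P = 3 * v ^ 2 := by
  have hint : Integrable (fun x : ℝ => x ^ 4) (gaussianReal 0 v) := by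
    simpa [Even.pow_abs (by decide : Even 4)] using
      (memLp_id_gaussianReal 4).integrable_norm_pow (by norm_num)
  rw [← hXv] at hint
  refine ⟨(integrable_map_measure (by fun_prop) hX.aemeasurable).1 hint, ?_⟩
  calc ∫ ω, X ω ^ 4 ∂P = ∫ x, x ^ 4 ∂P.map X :=
        (integral_map hX.aemeasurable (measurable_id.pow_const 4).aestronglyMeasurable).symm
    _ = 3 * v ^ 2 := by rw [hXv, integral_pow_four_gaussianReal]

lemma integral_sq_mul_sq_of_gaussian {X Y : Ω → ℝ} (hX : Measurable X) (hY : Measurable Y)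
    {a b c : ℝ} (hpsd : ∀ c₁ c₂ : ℝ, 0 ≤ c₁ ^ 2 * a + 2 * c₁ * c₂ * c + c₂ ^ 2 * b)
    (hlaw : ∀ c₁ c₂ : ℝ, P.map (fun ω => c₁ * X ω + c₂ * Y ω) =
      gaussianReal 0 (c₁ ^ 2 * a + 2 * c₁ * c₂ * c + c₂ ^ 2 * b).toNNReal) :
    Integrable (fun ω => X ω ^ 2 * Y ω ^ 2) P ∧
      ∫ ω, X ω ^ 2 * Y ω ^ 2 ∂P = a * b + 2 * c ^ 2 := by
  have moment (c₁ c₂ : ℝ) := integral_pow_four_of_map_eq_gaussianReal (by fun_prop) (hlaw c₁ c₂)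
  simp only [Real.coe_toNNReal _ (hpsd _ _)] at moment
  obtain ⟨hi₁, hv₁⟩ := moment 1 1
  obtain ⟨hi₂, hv₂⟩ := moment 1 (-1)
  obtain ⟨hi₃, hv₃⟩ := moment 1 0
  obtain ⟨hi₄, hv₄⟩ := moment 0 1
  -- polarization: `12 X²Y² = (X + Y)⁴ + (X - Y)⁴ - 2 X⁴ - 2 Y⁴`
  have hpol : (fun ω => X ω ^ 2 * Y ω ^ 2) = fun ω =>
      ((1 * X ω + 1 * Y ω) ^ 4 + (1 * X ω + -1 * Y ω) ^ 4
        - 2 * (1 * X ω + 0 * Y ω) ^ 4 - 2 * (0 * X ω + 1 * Y ω) ^ 4) / 12 := by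
    ext ω; ring
  refine ⟨hpol ▸ by fun_prop, ?_⟩
  rw [hpol, integral_div, integral_sub (by fun_prop) (by fun_prop),
    integral_sub (by fun_prop) (by fun_prop), integral_add hi₁ hi₂, integral_const_mul,
    integral_const_mul, hv₁, hv₂, hv₃, hv₄]
  ring

lemma IsCenteredGaussianProcess.map_mul_add_mul {u : ℝ → Ω → ℝ} {K : ℝ → ℝ → ℝ}
    (hG : IsCenteredGaussianProcess u P K) {s r : ℝ} (hs : 0 ≤ s) (hr : 0 ≤ r) (c₁ c₂ : ℝ) :
    P.map (fun ω => c₁ * u s ω + c₂ * u r ω) =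
      gaussianReal 0 (c₁ ^ 2 * K s s + c₁ * c₂ * (K s r + K r s) + c₂ ^ 2 * K r r).toNNReal := by
  convert hG 2 ![s, r] (fun i => by fin_cases i <;> assumption) ![c₁, c₂] using 3
  · simp [Fin.sum_univ_two]
  · simp [Fin.sum_univ_two]; ring

lemma IsCenteredGaussianProcess.integral_sq_mul_sq {u : ℝ → Ω → ℝ} {K : ℝ → ℝ → ℝ}
    (hG : IsCenteredGaussianProcess u P K) (hu : ∀ t, Measurable (u t)) {s r : ℝ} (hs : 0 ≤ s)
    (hr : 0 ≤ r) (hK : K r s = K s r)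
    (hpsd : ∀ c₁ c₂ : ℝ, 0 ≤ c₁ ^ 2 * K s s + 2 * c₁ * c₂ * K s r + c₂ ^ 2 * K r r) :
    Integrable (fun ω => u s ω ^ 2 * u r ω ^ 2) P ∧
      ∫ ω, u s ω ^ 2 * u r ω ^ 2 ∂P = K s s * K r r + 2 * K s r ^ 2 := by
  refine integral_sq_mul_sq_of_gaussian (hu s) (hu r) hpsd fun c₁ c₂ => ?_
  rw [hG.map_mul_add_mul hs hr, hK]
  ring_nf

lemma IsCenteredGaussianProcess.integral_sq_integral_sq [SFinite P] {u : ℝ → Ω → ℝ}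
    {K : ℝ → ℝ → ℝ} (hG : IsCenteredGaussianProcess u P K) (hu : ∀ t, Measurable (u t))
    (hcont : ∀ ω, Continuous fun t => u t ω) (hKc : Continuous (uncurry K))
    (hK : ∀ s r, K r s = K s r)
    (hpsd : ∀ s r, 0 ≤ s → 0 ≤ r → ∀ c₁ c₂ : ℝ,
      0 ≤ c₁ ^ 2 * K s s + 2 * c₁ * c₂ * K s r + c₂ ^ 2 * K r r)
    {t : ℝ} (ht : 0 ≤ t) :
    Integrable (fun ω => (∫ s in 0..t, u s ω ^ 2) ^ 2) P ∧
      ∫ ω, (∫ s in 0..t, u s ω ^ 2) ^ 2 ∂P =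
        (∫ s in 0..t, K s s) ^ 2 + 2 * ∫ s in 0..t, ∫ r in 0..t, K s r ^ 2 := by
  simp only [intervalIntegral.integral_of_le ht]
  set ν := volume.restrict (Ioc 0 t)
  let f : Ω → ℝ × ℝ → ℝ := fun ω p => u p.1 ω ^ 2 * u p.2 ω ^ 2
  let m : ℝ × ℝ → ℝ := fun p => K p.1 p.1 * K p.2 p.2 + 2 * K p.1 p.2 ^ 2
  have hsq (ω : Ω) : (∫ s, u s ω ^ 2 ∂ν) ^ 2 = ∫ p, f ω p ∂ν.prod ν := by
    rw [sq]; exact (integral_prod_mul (fun s => u s ω ^ 2) (fun s => u s ω ^ 2)).symm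
  have hmoment : ∀ᵐ p ∂ν.prod ν, Integrable (f · p) P ∧ ∫ ω, f ω p ∂P = m p := by
    filter_upwards [ae_mem_prod_restrict_Ioc 0 t] with p ⟨hp₁, hp₂⟩
    exact hG.integral_sq_mul_sq hu hp₁.1.le hp₂.1.le (hK _ _) (hpsd _ _ hp₁.1.le hp₂.1.le)
  have hKc' : Continuous fun p : ℝ × ℝ => K p.1 p.2 := hKc
  have hf : Integrable (uncurry f) (P.prod (ν.prod ν)) := by
    have hu' : Measurable (uncurry u) := measurable_uncurry_of_continuous_of_measurable hcont hu
    refine integrable_uncurry_of_nonneg ?_ (fun ω p => by positivity)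
      (hmoment.mono fun p hp => hp.1)
      ((Continuous.integrable_prod_restrict_Ioc (by fun_prop) 0 t).congr
        (hmoment.mono fun p hp => hp.2.symm))
    have hu₁ : Measurable fun q : Ω × (ℝ × ℝ) => u q.2.1 q.1 :=
      hu'.comp (measurable_snd.fst.prodMk measurable_fst)
    have hu₂ : Measurable fun q : Ω × (ℝ × ℝ) => u q.2.2 q.1 :=
      hu'.comp (measurable_snd.snd.prodMk measurable_fst)
    exact ((hu₁.pow_const 2).mul (hu₂.pow_const 2)).aestronglyMeasurable
  simp only [hsq]
  refine ⟨hf.integral_prod_left, ?_⟩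
  rw [integral_integral_swap hf, integral_congr_ae (hmoment.mono fun p hp => hp.2)]
  have hint (g : ℝ × ℝ → ℝ) (hg : Continuous g) := hg.integrable_prod_restrict_Ioc 0 t
  rw [integral_add (hint _ (by fun_prop)) (hint _ (by fun_prop)),
    integral_prod_mul (fun s => K s s) (fun s => K s s), integral_const_mul,
    integral_prod _ (hint _ (by fun_prop)), sq]

end

lemma exp_two_mul_mul (μ y : ℝ) : exp (2 * μ * y) = exp (μ * y) ^ 2 := by
  rw [← exp_nat_mul]; push_cast; ring_nf

lemma exp_neg_two_mul_mul (μ y : ℝ) : exp (-(2 * μ * y)) = (exp (μ * y) ^ 2)⁻¹ := by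
  rw [exp_neg, exp_two_mul_mul]

lemma exp_neg_four_mul_mul (μ y : ℝ) : exp (-(4 * μ * y)) = (exp (μ * y) ^ 4)⁻¹ := by
  rw [exp_neg, ← exp_nat_mul]; push_cast; ring_nf

noncomputable def ouCov (μ s t : ℝ) : ℝ :=
  exp (-(μ * (s + t))) * (exp (2 * μ * min s t) - 1) / (2 * μ)

section OrnsteinUhlenbeck

variable {μ : ℝ}

lemma ouCov_comm (μ s t : ℝ) : ouCov μ s t = ouCov μ t s := by
  rw [ouCov, ouCov, min_comm, add_comm]

lemma continuous_uncurry_ouCov (μ : ℝ) : Continuous (uncurry (ouCov μ)) := by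
  unfold ouCov uncurry; fun_prop

lemma ouCov_self (μ s : ℝ) : ouCov μ s s = (1 - exp (-(2 * μ * s))) / (2 * μ) := by
  rw [ouCov, min_self, mul_sub, ← exp_add, show -(μ * (s + s)) + 2 * μ * s = 0 by ring, exp_zero,
    mul_one]
  ring_nf

lemma ouCov_of_le (μ : ℝ) {s t : ℝ} (h : s ≤ t) :
    ouCov μ s t = exp (-(μ * (t - s))) * ouCov μ s s := by
  rw [ouCov, ouCov, min_eq_left h, min_self, mul_div_assoc, mul_div_assoc, ← mul_assoc, ← exp_add]
  ring_nf

lemma ouCov_self_nonneg (hμ : 0 < μ) {s : ℝ} (hs : 0 ≤ s) : 0 ≤ ouCov μ s s := by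
  rw [ouCov_self]
  have : exp (-(2 * μ * s)) ≤ 1 := exp_le_one_iff.2 (by nlinarith)
  exact div_nonneg (by linarith) (by positivity)

/-- With `ρ = e^{-μ(r-s)}`, the Markov property `K(s,r) = ρ K(s,s)`,
`K(r,r) = ρ² K(s,s) + (1-ρ²)/(2μ)` writes the form as `K(s,s) (c₁ + ρ c₂)² + c₂² (1-ρ²)/(2μ)`. -/
lemma ouCov_quadForm_nonneg (hμ : 0 < μ) {s r : ℝ} (hs : 0 ≤ s) (hr : 0 ≤ r) (c₁ c₂ : ℝ) :
    0 ≤ c₁ ^ 2 * ouCov μ s s + 2 * c₁ * c₂ * ouCov μ s r + c₂ ^ 2 * ouCov μ r r := by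
  wlog hsr : s ≤ r generalizing s r c₁ c₂
  · have := this hr hs c₂ c₁ (le_of_not_ge hsr)
    rw [ouCov_comm μ r s] at this
    linarith
  set ρ := exp (-(μ * (r - s)))
  have hρ : ρ ≤ 1 := exp_le_one_iff.2 (by nlinarith)
  have hrr : ouCov μ r r = ρ ^ 2 * ouCov μ s s + (1 - ρ ^ 2) / (2 * μ) := by
    have : ρ ^ 2 * exp (-(2 * μ * s)) = exp (-(2 * μ * r)) := by
      rw [← exp_nat_mul, ← exp_add]; push_cast; ring_nf
    rw [ouCov_self, ouCov_self, ← this]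
    ring
  have hform : c₁ ^ 2 * ouCov μ s s + 2 * c₁ * c₂ * ouCov μ s r + c₂ ^ 2 * ouCov μ r r =
      ouCov μ s s * (c₁ + ρ * c₂) ^ 2 + c₂ ^ 2 * (1 - ρ ^ 2) / (2 * μ) := by
    rw [hrr, ouCov_of_le μ hsr]
    ring
  have := ouCov_self_nonneg hμ hs
  have : 0 ≤ 1 - ρ ^ 2 := by nlinarith [exp_pos (-(μ * (r - s)))]
  rw [hform]
  positivity

lemma ouCov_sq_of_le (μ : ℝ) {s t : ℝ} (h : s ≤ t) :
    ouCov μ s t ^ 2 =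
      exp (-(2 * μ * t)) * (exp (2 * μ * s) - 2 + exp (-(2 * μ * s))) / (4 * μ ^ 2) := by
  rw [ouCov_of_le μ h, ouCov_self]
  simp only [mul_sub, neg_sub, exp_sub, exp_neg, exp_two_mul_mul]
  field_simp
  ring

lemma integral_ouCov_self (hμ : μ ≠ 0) (t : ℝ) :
    ∫ s in 0..t, ouCov μ s s = t / (2 * μ) - (1 - exp (-(2 * μ * t))) / (4 * μ ^ 2) := by
  simp only [ouCov_self]
  rw [intervalIntegral.integral_deriv_eq_sub'
    (fun s => s / (2 * μ) + exp (-(2 * μ * s)) / (4 * μ ^ 2)) ?_ (by fun_prop) (by fun_prop)]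
  · simp; ring
  · ext s; simp (disch := fun_prop); field_simp; ring

lemma integral_ouCov_sq (hμ : μ ≠ 0) {s t : ℝ} (hs : 0 ≤ s) (hst : s ≤ t) :
    ∫ r in 0..t, ouCov μ s r ^ 2 =
      (2 - 2 * exp (-(2 * μ * s)) - exp (-(2 * μ * t)) * exp (2 * μ * s) + 2 * exp (-(2 * μ * t))
        - exp (-(2 * μ * t)) * exp (-(2 * μ * s))) / (8 * μ ^ 3)
        - s * exp (-(2 * μ * s)) / (2 * μ ^ 2) := by
  have hint (a b : ℝ) : IntervalIntegrable (fun r => ouCov μ s r ^ 2) volume a b :=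
    (by unfold ouCov; fun_prop : Continuous _).intervalIntegrable a b
  rw [← intervalIntegral.integral_add_adjacent_intervals (hint 0 s) (hint s t)]
  have h1 : ∫ r in 0..s, ouCov μ s r ^ 2 =
      ∫ r in 0..s, exp (-(2 * μ * s)) * (exp (2 * μ * r) - 2 + exp (-(2 * μ * r))) / (4 * μ ^ 2) :=
    intervalIntegral.integral_congr fun r hr => by
      rw [ouCov_comm, ouCov_sq_of_le μ (uIcc_of_le hs ▸ hr).2]
  have h2 : ∫ r in s..t, ouCov μ s r ^ 2 =
      ∫ r in s..t, exp (-(2 * μ * r)) * (exp (2 * μ * s) - 2 + exp (-(2 * μ * s))) / (4 * μ ^ 2) :=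
    intervalIntegral.integral_congr fun r hr => by
      rw [ouCov_sq_of_le μ (uIcc_of_le hst ▸ hr).1]
  rw [h1, h2, intervalIntegral.integral_deriv_eq_sub' (fun r => exp (-(2 * μ * s)) *
      (exp (2 * μ * r) / (2 * μ) - 2 * r - exp (-(2 * μ * r)) / (2 * μ)) / (4 * μ ^ 2))
      ?_ (by fun_prop) (by fun_prop),
    intervalIntegral.integral_deriv_eq_sub' (fun r => -exp (-(2 * μ * r)) / (2 * μ) *
      (exp (2 * μ * s) - 2 + exp (-(2 * μ * s))) / (4 * μ ^ 2)) ?_ (by fun_prop) (by fun_prop)]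
  · simp only [mul_zero, neg_zero, exp_zero, exp_two_mul_mul, exp_neg_two_mul_mul]
    field_simp
    ring
  · ext r; simp (disch := fun_prop); field_simp
  · ext r; simp (disch := fun_prop); field_simp; ring

lemma integral_integral_ouCov_sq (hμ : μ ≠ 0) {t : ℝ} (ht : 0 ≤ t) :
    ∫ s in 0..t, ∫ r in 0..t, ouCov μ s r ^ 2 =
      t / (4 * μ ^ 3) + t * exp (-(2 * μ * t)) / (2 * μ ^ 3)
        + (exp (-(4 * μ * t)) + 4 * exp (-(2 * μ * t)) - 5) / (16 * μ ^ 4) := by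
  rw [intervalIntegral.integral_congr fun s hs => integral_ouCov_sq hμ (uIcc_of_le ht ▸ hs).1
      (uIcc_of_le ht ▸ hs).2,
    intervalIntegral.integral_deriv_eq_sub' (fun s =>
      (2 * s + exp (-(2 * μ * s)) / μ - exp (-(2 * μ * t)) * exp (2 * μ * s) / (2 * μ)
        + 2 * exp (-(2 * μ * t)) * s + exp (-(2 * μ * t)) * exp (-(2 * μ * s)) / (2 * μ))
        / (8 * μ ^ 3)
      + (s * exp (-(2 * μ * s)) / (2 * μ) + exp (-(2 * μ * s)) / (4 * μ ^ 2)) / (2 * μ ^ 2))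
      ?_ (by fun_prop) (by fun_prop)]
  · simp only [mul_zero, neg_zero, exp_zero, exp_two_mul_mul, exp_neg_two_mul_mul,
      exp_neg_four_mul_mul]
    field_simp
    ring
  · ext s; simp (disch := fun_prop); field_simp; ring

/-- `E[ξ(t)²]`, where `ξ(t) = ∫₀ᵗ u(s)² ds`. -/
noncomputable def ouSqIntegralSecondMoment (μ t : ℝ) : ℝ :=
  t ^ 2 / (4 * μ ^ 2) + t / (4 * μ ^ 3) + 5 * t * exp (-(2 * μ * t)) / (4 * μ ^ 3)
    + (3 * exp (-(4 * μ * t)) + 6 * exp (-(2 * μ * t)) - 9) / (16 * μ ^ 4)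

lemma ouSqIntegralSecondMoment_eq_integral (hμ : μ ≠ 0) {t : ℝ} (ht : 0 ≤ t) :
    ouSqIntegralSecondMoment μ t =
      (∫ s in 0..t, ouCov μ s s) ^ 2 + 2 * ∫ s in 0..t, ∫ r in 0..t, ouCov μ s r ^ 2 := by
  rw [integral_ouCov_self hμ, integral_integral_ouCov_sq hμ ht, ouSqIntegralSecondMoment]
  simp only [exp_neg_two_mul_mul, exp_neg_four_mul_mul]
  field_simp
  ring

lemma integral_ouSqIntegralSecondMoment (hμ : μ ≠ 0) (T : ℝ) :
    ∫ t in 0..T, ouSqIntegralSecondMoment μ t =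
      (35 - 3 * exp (-(4 * μ * T)) - 32 * exp (-(2 * μ * T))) / (64 * μ ^ 5)
      - (9 * T + 10 * T * exp (-(2 * μ * T))) / (16 * μ ^ 4)
      + T ^ 2 / (8 * μ ^ 3) + T ^ 3 / (12 * μ ^ 2) := by
  rw [intervalIntegral.integral_deriv_eq_sub' (fun t =>
      t ^ 3 / (12 * μ ^ 2) + t ^ 2 / (8 * μ ^ 3)
      - 5 * (t * exp (-(2 * μ * t)) / (2 * μ) + exp (-(2 * μ * t)) / (4 * μ ^ 2)) / (4 * μ ^ 3)
      - (3 * exp (-(4 * μ * t)) / (4 * μ) + 3 * exp (-(2 * μ * t)) / μ + 9 * t) / (16 * μ ^ 4))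
      ?_ (by fun_prop) (by unfold ouSqIntegralSecondMoment; fun_prop)]
  · simp only [mul_zero, neg_zero, exp_zero]
    field_simp
    ring
  · ext t; unfold ouSqIntegralSecondMoment; simp (disch := fun_prop); field_simp; ring

lemma IsCenteredGaussianProcess.integral_sq_integral_sq_ouCov {Ω : Type*} [MeasurableSpace Ω]
    {P : Measure Ω} [SFinite P] {u : ℝ → Ω → ℝ} (hG : IsCenteredGaussianProcess u P (ouCov μ))
    (hμ : 0 < μ) (hu : ∀ t, Measurable (u t)) (hcont : ∀ ω, Continuous fun t => u t ω) {t : ℝ}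
    (ht : 0 ≤ t) :
    Integrable (fun ω => (∫ s in 0..t, u s ω ^ 2) ^ 2) P ∧
      ∫ ω, (∫ s in 0..t, u s ω ^ 2) ^ 2 ∂P = ouSqIntegralSecondMoment μ t := by
  rw [ouSqIntegralSecondMoment_eq_integral hμ.ne' ht]
  exact hG.integral_sq_integral_sq hu hcont (continuous_uncurry_ouCov μ)
    (fun s r => ouCov_comm μ r s) (fun _ _ hs hr => ouCov_quadForm_nonneg hμ hs hr) ht

end OrnsteinUhlenbeck

/-- Let `u` be the zero-started Ornstein–Uhlenbeck process solving `du + μ u dt = dw`,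
`ξ(t) = ∫_0^t u²(s) ds`, and `Z = ∫_0^T ξ(t)² dt`. Then
`E[Z] = (35 - 3e^{-4μT} - 32e^{-2μT})/(64μ⁵) - (9T + 10T e^{-2μT})/(16μ⁴)
  + T²/(8μ³) + T³/(12μ²)`. -/
theorem expectation_Z
    {Ω : Type*} [MeasurableSpace Ω] (P : Measure Ω) [IsProbabilityMeasure P]
    (μ T : ℝ) (hμ : 0 < μ) (hT : 0 < T)
    (u : ℝ → Ω → ℝ) (hmeas : ∀ t, Measurable (u t))
    (hcont : ∀ ω, Continuous fun t => u t ω)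
    (hGauss : IsCenteredGaussianProcess u P
      (fun s t => Real.exp (-(μ * (s + t))) * (Real.exp (2 * μ * min s t) - 1) / (2 * μ)))
    (ξ : ℝ → Ω → ℝ) (hξ : ∀ t ω, ξ t ω = ∫ s in (0:ℝ)..t, (u s ω) ^ 2)
    (Z : Ω → ℝ) (hZ : ∀ ω, Z ω = ∫ t in (0:ℝ)..T, (ξ t ω) ^ 2) :
    ∫ ω, Z ω ∂P =
      (35 - 3 * Real.exp (-(4 * μ * T)) - 32 * Real.exp (-(2 * μ * T))) / (64 * μ ^ 5)
      - (9 * T + 10 * T * Real.exp (-(2 * μ * T))) / (16 * μ ^ 4)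
      + T ^ 2 / (8 * μ ^ 3) + T ^ 3 / (12 * μ ^ 2) := by
  obtain rfl : ξ = fun t ω => ∫ s in (0:ℝ)..t, u s ω ^ 2 := funext fun t => funext (hξ t)
  obtain rfl : Z = fun ω => ∫ t in (0:ℝ)..T, (∫ s in (0:ℝ)..t, u s ω ^ 2) ^ 2 := funext hZ
  have hmoment (t : ℝ) (ht : 0 ≤ t) :=
    hGauss.integral_sq_integral_sq_ouCov (μ := μ) hμ hmeas hcont ht
  have hξm := measurable_uncurry_intervalIntegral (f := fun s ω => u s ω ^ 2)
    ((measurable_uncurry_of_continuous_of_measurable hcont hmeas).pow_const 2)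
    (fun ω => (hcont ω).pow 2) 0
  calc ∫ ω, (∫ t in (0:ℝ)..T, (∫ s in (0:ℝ)..t, u s ω ^ 2) ^ 2) ∂P
      = ∫ ω, (∫ t in Ioc 0 T, (∫ s in (0:ℝ)..t, u s ω ^ 2) ^ 2) ∂P := by
        simp only [intervalIntegral.integral_of_le hT.le]
    _ = ∫ t in Ioc 0 T, ∫ ω, (∫ s in (0:ℝ)..t, u s ω ^ 2) ^ 2 ∂P := by
        refine integral_integral_swap (integrable_uncurry_of_nonneg
          ((hξm.comp measurable_swap).pow_const 2).aestronglyMeasurable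
          (fun _ _ => sq_nonneg _) ?_ ?_)
        · filter_upwards [ae_restrict_mem measurableSet_Ioc] with t ht
          exact (hmoment t ht.1.le).1
        · refine IntegrableOn.congr_fun ?_ (fun t ht => (hmoment t ht.1.le).2.symm)
            measurableSet_Ioc
          exact (by unfold ouSqIntegralSecondMoment; fun_prop : Continuous _).integrableOn_Ioc
    _ = ∫ t in Ioc 0 T, ouSqIntegralSecondMoment μ t :=
        setIntegral_congr_fun measurableSet_Ioc fun t ht => (hmoment t ht.1.le).2
    _ = _ := by
        rw [← intervalIntegral.integral_of_le hT.le, integral_ouSqIntegralSecondMoment hμ.ne']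
end
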